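/- arXiv:2003.03777 — 2 statements merged into one kernel-verified Lean document; each statement's English description precedes it below -/
import Mathlib

section
/- Let S be an N×N real matrix, x ∈ ℝᴺ, P an N×N permutation matrix, σ: ℝ → ℝ applied entrywise, and h_0,…,h_K ∈ ℝ filter taps. The graph perceptron Φ(x; S) = σ(H(S) x), with H(S) = Σ_{k=0}^K h_k S^k, satisfies Φ(Pᵀ x; Pᵀ S P) = Pᵀ Φ(x; S). -/
open Matrix BigOperators

/-- A permutation matrix: entries in `{0,1}` and `Pᵀ𝟙 = 𝟙`, `P𝟙 = 𝟙`. -/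
def IsPermutationMatrix {N : ℕ} (P : Matrix (Fin N) (Fin N) ℝ) : Prop :=
  (∀ i j, P i j = 0 ∨ P i j = 1) ∧ Pᵀ *ᵥ (1 : Fin N → ℝ) = 1 ∧ P *ᵥ (1 : Fin N → ℝ) = 1

/-- The graph convolutional (FIR) filter `H(S) = Σ_{k=0}^K h_k S^k`. -/
def graphFilter {N : ℕ} (K : ℕ) (h : ℕ → ℝ) (S : Matrix (Fin N) (Fin N) ℝ) :
    Matrix (Fin N) (Fin N) ℝ :=
  ∑ k ∈ Finset.range (K + 1), h k • S ^ k

/-- The graph perceptron `Φ(x; S) = σ(H(S) x)`, with `σ` applied entrywise. -/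
def graphPerceptron {N : ℕ} (σ : ℝ → ℝ) (K : ℕ) (h : ℕ → ℝ)
    (S : Matrix (Fin N) (Fin N) ℝ) (x : Fin N → ℝ) : Fin N → ℝ :=
  fun i => σ ((graphFilter K h S *ᵥ x) i)

/-- If a `{0,1}`-valued function on `Fin N` sums to `1`, there is exactly one index
where it equals `1`. -/
lemma exists_unique_one {N : ℕ} (g : Fin N → ℝ) (h01 : ∀ k, g k = 0 ∨ g k = 1)
    (hs : ∑ k, g k = 1) : ∃! k, g k = 1 := by
  have hnn : ∀ k, 0 ≤ g k := fun k => by rcases h01 k with h | h <;> simp [h]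
  have hex : ∃ k, g k = 1 := by
    by_contra hc
    push_neg at hc
    have : ∀ k, g k = 0 := fun k => (h01 k).resolve_right (hc k)
    simp [this] at hs
  obtain ⟨a, ha⟩ := hex
  refine ⟨a, ha, fun b hb => ?_⟩
  by_contra hne
  have h2 : (2 : ℝ) ≤ ∑ k, g k := by
    have : g b + g a ≤ ∑ k, g k := by
      rw [← Finset.add_sum_erase _ _ (Finset.mem_univ a)]
      have hb' : b ∈ Finset.univ.erase a := Finset.mem_erase.mpr ⟨hne, Finset.mem_univ b⟩
      have := Finset.single_le_sum (f := g) (fun k _ => hnn k) hb'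
      linarith
    rw [ha, hb] at this; linarith
  rw [hs] at h2; linarith

/-- A permutation matrix is the indicator matrix of an injective map of indices. -/
lemma perm_structure {N : ℕ} (P : Matrix (Fin N) (Fin N) ℝ) (hP : IsPermutationMatrix P) :
    ∃ f : Fin N → Fin N, Function.Injective f ∧ ∀ k i, P k i = if k = f i then 1 else 0 := by
  obtain ⟨h01, hcol, hrow⟩ := hP
  have hcol' : ∀ i, ∑ k, P k i = 1 := by
    intro i
    have := congrFun hcol i
    simpa [Matrix.mulVec, dotProduct] using this
  have hrow' : ∀ k, ∑ i, P k i = 1 := by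
    intro k
    have := congrFun hrow k
    simpa [Matrix.mulVec, dotProduct] using this
  have hc : ∀ i, ∃! k, P k i = 1 := fun i =>
    exists_unique_one (fun k => P k i) (fun k => h01 k i) (hcol' i)
  have hr : ∀ k, ∃! i, P k i = 1 := fun k =>
    exists_unique_one (fun i => P k i) (fun i => h01 k i) (hrow' k)
  choose f hf1 hf2 using hc
  refine ⟨f, ?_, ?_⟩
  · intro i j hij
    exact ((hr (f i)).unique (hf1 i) (by rw [hij]; exact hf1 j))
  · intro k i
    by_cases hk : k = f i
    · simp [hk, hf1 i]
    · simp only [if_neg hk]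
      rcases h01 k i with h | h
      · exact h
      · exact absurd (hf2 i k h) hk

lemma perm_transpose_mul {N : ℕ} (P : Matrix (Fin N) (Fin N) ℝ)
    (hP : IsPermutationMatrix P) : Pᵀ * P = 1 := by
  obtain ⟨f, hfinj, hPf⟩ := perm_structure P hP
  ext i j
  simp only [Matrix.mul_apply, Matrix.transpose_apply, Matrix.one_apply]
  rw [Finset.sum_eq_single (f i)]
  · rw [hPf, hPf, if_pos rfl, one_mul]
    by_cases hij : i = j
    · simp [hij]
    · rw [if_neg hij, if_neg (fun hc => hij (hfinj hc))]
  · intro k _ hk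
    rw [hPf, if_neg hk, zero_mul]
  · simp

lemma perm_mul_transpose {N : ℕ} (P : Matrix (Fin N) (Fin N) ℝ)
    (hP : IsPermutationMatrix P) : P * Pᵀ = 1 :=
  mul_eq_one_comm.mp (perm_transpose_mul P hP)

/-- Permutation equivariance of the graph perceptron:
`Φ(Pᵀ x; Pᵀ S P) = Pᵀ Φ(x; S)`. -/
theorem graphPerceptron_perm_equivariant {N K : ℕ} (S P : Matrix (Fin N) (Fin N) ℝ)
    (hP : IsPermutationMatrix P) (σ : ℝ → ℝ) (h : ℕ → ℝ) (x : Fin N → ℝ) :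
    graphPerceptron σ K h (Pᵀ * S * P) (Pᵀ *ᵥ x) = Pᵀ *ᵥ graphPerceptron σ K h S x := by
  obtain ⟨f, hfinj, hPf⟩ := perm_structure P hP
  have hPP : P * Pᵀ = 1 := perm_mul_transpose P hP
  have hPtP : Pᵀ * P = 1 := perm_transpose_mul P hP
  have hpow : ∀ k, (Pᵀ * S * P) ^ k = Pᵀ * S ^ k * P := by
    intro k
    induction k with
    | zero => simp [hPtP]
    | succ k ih =>
      rw [pow_succ, ih, pow_succ]
      have key : P * (Pᵀ * (S * P)) = S * P := by
        rw [← Matrix.mul_assoc, hPP, Matrix.one_mul]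
      simp only [Matrix.mul_assoc, key]
  have hfilter : graphFilter K h (Pᵀ * S * P) = Pᵀ * graphFilter K h S * P := by
    unfold graphFilter
    simp [hpow, Matrix.mul_sum, Matrix.sum_mul, Matrix.mul_smul, Matrix.smul_mul]
  have hvec : ∀ (v : Fin N → ℝ) i, (Pᵀ *ᵥ v) i = v (f i) := by
    intro v i
    simp only [Matrix.mulVec, dotProduct, Matrix.transpose_apply, hPf]
    simp [ite_mul]
  have hmv : (Pᵀ * graphFilter K h S * P) *ᵥ (Pᵀ *ᵥ x) = Pᵀ *ᵥ (graphFilter K h S *ᵥ x) := by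
    rw [Matrix.mulVec_mulVec, Matrix.mul_assoc, Matrix.mul_assoc, hPP, Matrix.mul_one,
      ← Matrix.mulVec_mulVec]
  funext i
  unfold graphPerceptron
  rw [hfilter, hmv, hvec, hvec]
end

section
/- (Permutation equivariance of GCNNs.) Let S be an N×N real matrix and P an N×N permutation matrix; let Ŝ = Pᵀ S P. Consider a graph convolutional neural network with L layers, feature dimensions F_0, F_1, …, F_L, filter taps h_{ℓk}^{fg} ∈ ℝ for ℓ = 1,…,L, k = 0,…,K, f = 1,…,F_ℓ, g = 1,…,F_{ℓ−1}, and entrywise nonlinearity σ: ℝ → ℝ, defined by the layer recursion x_ℓ^f = σ( Σ_{g=1}^{F_{ℓ−1}} Σ_{k=0}^{K} h_{ℓk}^{fg} S^k x_{ℓ−1}^g ) with input features x_0^1,…,x_0^{F_0} ∈ ℝᴺ. Let Φ(x; S, H) denote the collection of output features (x_L^1,…,x_L^{F_L}). Then Φ(Pᵀ x; Pᵀ S P, H) = Pᵀ Φ(x; S, H), meaning that if each input feature is permuted as x̂_0^g = Pᵀ x_0^g and the shift is permuted as Ŝ = Pᵀ S P, then each output feature of the GCNN run on (x̂, Ŝ)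 equals Pᵀ times the corresponding output feature of the GCNN run on (x, S). -/
open Matrix BigOperators

/-- The features of a GCNN: `gcnn σ S K F h x0 ℓ f` is the `f`-th feature at layer `ℓ`
of the GCNN with shift operator `S`, filter order `K`, feature dimensions `F`,
filter taps `h ℓ k f g`, entrywise nonlinearity `σ`, and input features `x0`:
`x_ℓ^f = σ( Σ_{g=1}^{F_{ℓ−1}} Σ_{k=0}^{K} h_{ℓk}^{fg} S^k x_{ℓ−1}^g )`. -/
def gcnn {N : ℕ} (σ : ℝ → ℝ) (S : Matrix (Fin N) (Fin N) ℝ) (K : ℕ) (F : ℕ → ℕ)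
    (h : ℕ → ℕ → ℕ → ℕ → ℝ) (x0 : ℕ → Fin N → ℝ) : ℕ → ℕ → Fin N → ℝ
  | 0 => x0
  | (ℓ + 1) => fun f i =>
      σ ((∑ g ∈ Finset.range (F ℓ), ∑ k ∈ Finset.range (K + 1),
            h (ℓ + 1) k f g • (S ^ k *ᵥ gcnn σ S K F h x0 ℓ g)) i)

lemma exists_perm {N : ℕ} {P : Matrix (Fin N) (Fin N) ℝ} (hP : IsPermutationMatrix P) :
    ∃ e : Equiv.Perm (Fin N), ∀ i j, P i j = if e i = j then 1 else 0 := by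
  obtain ⟨h01, hcol, hrow⟩ := hP
  have hrs : ∀ i : Fin N, ∑ j, P i j = 1 := by
    intro i
    have := congrFun hrow i
    simpa [mulVec, dotProduct] using this
  have hcs : ∀ j : Fin N, ∑ i, P i j = 1 := by
    intro j
    have := congrFun hcol j
    simpa [mulVec, dotProduct, transpose_apply] using this
  have hcard : ∀ i : Fin N, (Finset.univ.filter (fun j => P i j = 1)).card = 1 := by
    intro i
    have : ∑ j, P i j = ((Finset.univ.filter (fun j => P i j = 1)).card : ℝ) := by
      rw [Finset.card_filter]
      push_cast
      refine Finset.sum_congr rfl fun j _ => ?_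
      rcases h01 i j with hh | hh <;> simp [hh]
    have h1 : ((Finset.univ.filter (fun j => P i j = 1)).card : ℝ) = 1 := by
      rw [← this, hrs]
    exact_mod_cast h1
  choose g hg using fun i => Finset.card_eq_one.mp (hcard i)
  have hmem : ∀ i j, P i j = 1 ↔ j = g i := by
    intro i j
    constructor
    · intro hpij
      have : j ∈ Finset.univ.filter (fun j => P i j = 1) := by simp [hpij]
      rw [hg i] at this; simpa using this
    · rintro rfl
      have : g i ∈ Finset.univ.filter (fun j => P i j = 1) := by
        rw [hg i]; simp
      simpa using this
  have hinj : Function.Injective g := by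
    intro i1 i2 hgg
    by_contra hne
    set j := g i1 with hj
    have hsub : ({i1, i2} : Finset (Fin N)) ⊆ Finset.univ := Finset.subset_univ _
    have hle : ∑ i ∈ ({i1, i2} : Finset (Fin N)), P i j ≤ ∑ i, P i j := by
      refine Finset.sum_le_sum_of_subset_of_nonneg hsub ?_
      intro i _ _
      rcases h01 i j with hh | hh <;> simp [hh]
    rw [Finset.sum_pair hne] at hle
    have h1 : P i1 j = 1 := (hmem i1 j).mpr rfl
    have h2 : P i2 j = 1 := (hmem i2 j).mpr (hj.trans hgg)
    rw [h1, h2, hcs j] at hle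
    norm_num at hle
  refine ⟨Equiv.ofBijective g (Finite.injective_iff_bijective.mp hinj), fun i j => ?_⟩
  by_cases hij : g i = j
  · simp [Equiv.ofBijective, hij, (hmem i j).mpr hij.symm]
  · have : P i j ≠ 1 := fun hc => hij ((hmem i j).mp hc).symm
    rcases h01 i j with hh | hh
    · simp [Equiv.ofBijective, hij, hh]
    · exact absurd hh this

/-- Permutation equivariance of GCNNs: permuting the input features as `Pᵀ x_0^g` and
the shift as `Ŝ = Pᵀ S P` permutes every output feature: `Φ(Pᵀx; PᵀSP, H) = PᵀΦ(x; S, H)`. -/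
theorem gcnn_perm_equivariant {N K : ℕ} (S P : Matrix (Fin N) (Fin N) ℝ)
    (hP : IsPermutationMatrix P) (σ : ℝ → ℝ) (F : ℕ → ℕ) (h : ℕ → ℕ → ℕ → ℕ → ℝ)
    (x0 : ℕ → Fin N → ℝ) (L : ℕ) (f : ℕ) :
    gcnn σ (Pᵀ * S * P) K F h (fun g => Pᵀ *ᵥ x0 g) L f
      = Pᵀ *ᵥ gcnn σ S K F h x0 L f := by
  obtain ⟨e, he⟩ := exists_perm hP
  have hPt : ∀ v : Fin N → ℝ, Pᵀ *ᵥ v = fun j => v (e.symm j) := by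
    intro v; funext j
    simp only [mulVec, dotProduct, transpose_apply, he]
    calc ∑ i, (if e i = j then (1:ℝ) else 0) * v i
        = ∑ i, (if i = e.symm j then v i else 0) := by
          refine Finset.sum_congr rfl fun i _ => ?_
          by_cases hi : i = e.symm j
          · subst hi; simp
          · have hne : e i ≠ j := fun hh => hi (by rw [← hh]; simp)
            simp [hne, hi]
      _ = v (e.symm j) := by simp
  have hPPt : P * Pᵀ = 1 := by
    ext i j
    simp only [mul_apply, transpose_apply, he, one_apply]
    calc ∑ k, (if e i = k then (1:ℝ) else 0) * (if e j = k then 1 else 0)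
        = ∑ k, (if k = e i then (if e j = k then (1:ℝ) else 0) else 0) := by
          refine Finset.sum_congr rfl fun k _ => ?_
          by_cases hk : e i = k
          · simp [hk]
          · have hk' : ¬ k = e i := fun hh => hk hh.symm
            simp [hk, hk']
      _ = (if e j = e i then (1:ℝ) else 0) := by rw [Finset.sum_ite_eq']; simp
      _ = (if i = j then (1:ℝ) else 0) := by
          by_cases hij : i = j
          · simp [hij]
          · have : e j ≠ e i := fun hh => hij (e.injective hh).symm
            simp [hij, this]
  have hpow : ∀ (k : ℕ) (v : Fin N → ℝ),
      (Pᵀ * S * P) ^ k *ᵥ (Pᵀ *ᵥ v) = Pᵀ *ᵥ (S ^ k *ᵥ v) := by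
    intro k
    induction k with
    | zero => intro v; simp
    | succ k ih =>
      intro v
      calc (Pᵀ * S * P) ^ (k + 1) *ᵥ (Pᵀ *ᵥ v)
          = (Pᵀ * S * P) *ᵥ ((Pᵀ * S * P) ^ k *ᵥ (Pᵀ *ᵥ v)) := by
            rw [pow_succ', ← mulVec_mulVec]
        _ = (Pᵀ * S * P) *ᵥ (Pᵀ *ᵥ (S ^ k *ᵥ v)) := by rw [ih]
        _ = ((Pᵀ * S * P) * Pᵀ) *ᵥ (S ^ k *ᵥ v) := by rw [mulVec_mulVec]
        _ = (Pᵀ * S) *ᵥ (S ^ k *ᵥ v) := by rw [Matrix.mul_assoc, hPPt, Matrix.mul_one]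
        _ = Pᵀ *ᵥ (S ^ (k + 1) *ᵥ v) := by
            rw [mulVec_mulVec, pow_succ', Matrix.mul_assoc, ← mulVec_mulVec, ← mulVec_mulVec]
  induction L generalizing f with
  | zero => rfl
  | succ L ih =>
    show (fun i => σ _) = _
    rw [hPt]
    funext i
    show σ _ = σ _
    congr 1
    have hsum : ∀ (w : ℕ → ℕ → Fin N → ℝ),
        (∑ g ∈ Finset.range (F L), ∑ k ∈ Finset.range (K + 1),
          h (L + 1) k f g • w g k) (e.symm i)
        = ∑ g ∈ Finset.range (F L), ∑ k ∈ Finset.range (K + 1),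
          h (L + 1) k f g • (w g k (e.symm i)) := by
      intro w; simp
    simp only [Finset.sum_apply, Pi.smul_apply]
    refine Finset.sum_congr rfl fun g _ => Finset.sum_congr rfl fun k _ => ?_
    congr 1
    rw [ih g, hpow k, hPt]
end
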